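/- Let w := ∫_{[0,1]^d} g(x)²·Ψ(x) dx and β := ∫_{[0,1]^d} r(x)·Ψ(x) dx. For n ≥ 3 set ρ_n := √(n/ln n), K_i := Y_i²·Ψ(X_i) − w, and define the truncated estimator β̂ := (1/n)·Σ_{i=1}^n K_i·1_{{|K_i| ≤ ρ_n}}. Then, with M := 16·(E[U⁴]·‖f‖_∞⁴ + ‖g‖_∞⁴)·∫_{[0,1]^d} Ψ(x)² dx + 2·‖g‖_∞⁴·(∫_{[0,1]^d} |Ψ(x)| dx)², one has E[(β̂ − β)²] ≤ (M + M²)·(ln n)/n. (This is the second inequality of Lemma 2 of the paper under assumption set H2, stated for a general bounded coefficient function Ψ.) -/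

import Mathlib

/-!
Put `K = Y²Ψ(X) - w`. Independence of `X` and `U` with `E U = 0`, `E U² = 1` gives `E K = β`,
and `(a + b)⁴ ≤ 8 (a⁴ + b⁴)` together with `|w| ≤ ‖g‖²_∞ ∫ |Ψ|` gives `E K² ≤ M`.
Truncation at level `ρ` does not increase the second moment and moves the mean by at most
`E K² / ρ`, because `|x| ≤ x² / ρ` when `|x| > ρ`. The bias-variance decomposition of the
average of the `n` independent truncated summands then yields
`E (β̂ - β)² ≤ E K² / n + (E K² / ρ)² ≤ (M + M²) ln n / n`, as `ρ² = n / ln n` and `ln n ≥ 1`.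
-/

open MeasureTheory ProbabilityTheory

/-- Unlike `ProbabilityTheory.truncation`, which keeps `Set.Ioc (-ρ) ρ`, this keeps the closed
interval `[-ρ, ρ]`, as the estimator does. -/
noncomputable def truncate (ρ x : ℝ) : ℝ := if |x| ≤ ρ then x else 0

lemma measurable_truncate (ρ : ℝ) : Measurable (truncate ρ) :=
  Measurable.ite (measurableSet_le measurable_id.abs measurable_const) measurable_id
    measurable_const

lemma abs_truncate_le_abs (ρ x : ℝ) : |truncate ρ x| ≤ |x| := by
  unfold truncate; split_ifs <;> simp

lemma abs_truncate_sub_le {ρ : ℝ} (hρ : 0 < ρ) (x : ℝ) : |truncate ρ x - x| ≤ x ^ 2 / ρ := by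
  unfold truncate
  split_ifs with hx
  · simp only [sub_self, abs_zero]; positivity
  · rw [zero_sub, abs_neg, le_div_iff₀ hρ, ← sq_abs]
    nlinarith [abs_nonneg x]

lemma add_pow_four_le (a b : ℝ) : (a + b) ^ 4 ≤ 8 * (a ^ 4 + b ^ 4) :=
  calc (a + b) ^ 4 = ((a + b) ^ 2) ^ 2 := by ring
    _ ≤ (2 * (a ^ 2 + b ^ 2)) ^ 2 := by gcongr; exact add_sq_le
    _ = 4 * (a ^ 2 + b ^ 2) ^ 2 := by ring
    _ ≤ 4 * (2 * ((a ^ 2) ^ 2 + (b ^ 2) ^ 2)) := by gcongr; exact add_sq_le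
    _ = 8 * (a ^ 4 + b ^ 4) := by ring

lemma mul_add_sq_mul_sq_le {a b c u F G : ℝ} (ha : |a| ≤ F) (hb : |b| ≤ G) :
    ((a * u + b) ^ 2 * c) ^ 2 ≤ 8 * ((F ^ 4 * u ^ 4 + G ^ 4) * c ^ 2) := by
  have h4 : Even 4 := by norm_num
  have ha4 : a ^ 4 ≤ F ^ 4 := h4.pow_abs a ▸ pow_le_pow_left₀ (abs_nonneg a) ha 4
  have hb4 : b ^ 4 ≤ G ^ 4 := h4.pow_abs b ▸ pow_le_pow_left₀ (abs_nonneg b) hb 4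
  calc ((a * u + b) ^ 2 * c) ^ 2 = (a * u + b) ^ 4 * c ^ 2 := by ring
    _ ≤ 8 * ((a * u) ^ 4 + b ^ 4) * c ^ 2 := by gcongr; exact add_pow_four_le _ _
    _ ≤ 8 * ((F ^ 4 * u ^ 4 + G ^ 4) * c ^ 2) := by rw [mul_pow, ← mul_assoc]; gcongr

section Moments

variable {Ω : Type*} [MeasurableSpace Ω] {P : Measure Ω}

lemma memLp_truncate {K : Ω → ℝ} {p : ENNReal} (hK : MemLp K p P) (ρ : ℝ) :
    MemLp (fun ω => truncate ρ (K ω)) p P :=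
  hK.mono ((measurable_truncate ρ).comp_aemeasurable hK.aemeasurable).aestronglyMeasurable
    (ae_of_all _ fun ω => abs_truncate_le_abs ρ (K ω))

lemma ae_norm_sq_mul_le {a b : Ω → ℝ} {A B : ℝ} (ha : ∀ᵐ ω ∂P, |a ω| ≤ A)
    (hb : ∀ᵐ ω ∂P, |b ω| ≤ B) : ∀ᵐ ω ∂P, ‖a ω ^ 2 * b ω‖ ≤ A ^ 2 * B := by
  filter_upwards [ha, hb] with ω ha hb
  rw [Real.norm_eq_abs, abs_mul, abs_pow]
  bound

lemma abs_integral_sq_mul_le {a b : Ω → ℝ} {A : ℝ} (hb : Integrable b P)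
    (ha : ∀ᵐ ω ∂P, |a ω| ≤ A) : |∫ ω, a ω ^ 2 * b ω ∂P| ≤ A ^ 2 * ∫ ω, |b ω| ∂P := by
  rw [← Real.norm_eq_abs, ← integral_const_mul]
  refine norm_integral_le_of_norm_le (hb.abs.const_mul _) ?_
  filter_upwards [ha] with ω ha
  rw [Real.norm_eq_abs, abs_mul, abs_pow]
  gcongr

variable [IsProbabilityMeasure P]

lemma variance_truncate_le {K : Ω → ℝ} (hK : MemLp K 2 P) (ρ : ℝ) :
    Var[fun ω => truncate ρ (K ω); P] ≤ ∫ ω, K ω ^ 2 ∂P :=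
  (variance_le_expectation_sq (memLp_truncate hK ρ).aestronglyMeasurable).trans <|
    integral_mono (memLp_truncate hK ρ).integrable_sq hK.integrable_sq fun ω =>
      sq_le_sq.2 (abs_truncate_le_abs ρ (K ω))

lemma abs_integral_truncate_sub_le {K : Ω → ℝ} (hK : MemLp K 2 P) {ρ : ℝ} (hρ : 0 < ρ) :
    |∫ ω, truncate ρ (K ω) ∂P - ∫ ω, K ω ∂P| ≤ (∫ ω, K ω ^ 2 ∂P) / ρ := by
  have hKint := hK.integrable one_le_two
  have hTint := (memLp_truncate hK ρ).integrable one_le_two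
  rw [← integral_sub hTint hKint, ← integral_div]
  exact abs_integral_le_integral_abs.trans <|
    integral_mono (hTint.sub hKint).abs (hK.integrable_sq.div_const ρ) fun ω =>
      abs_truncate_sub_le hρ (K ω)

lemma integral_sub_const_sq_le {Z : Ω → ℝ} (hZ : MemLp Z 2 P) (w : ℝ) :
    ∫ ω, (Z ω - w) ^ 2 ∂P ≤ 2 * ∫ ω, Z ω ^ 2 ∂P + 2 * w ^ 2 :=
  calc ∫ ω, (Z ω - w) ^ 2 ∂P ≤ ∫ ω, 2 * (Z ω ^ 2 + w ^ 2) ∂P :=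
        integral_mono (hZ.sub (memLp_const w)).integrable_sq
          ((hZ.integrable_sq.add (integrable_const _)).const_mul 2) fun ω => by
          simpa [sub_eq_add_neg] using add_sq_le (a := Z ω) (b := -w)
    _ = 2 * ∫ ω, Z ω ^ 2 ∂P + 2 * w ^ 2 := by
      rw [integral_const_mul, integral_add hZ.integrable_sq (integrable_const _)]
      simp [mul_add]

lemma integral_sub_const_sq_eq_variance_add {Z : Ω → ℝ} (hZ : MemLp Z 2 P) (b : ℝ) :
    ∫ ω, (Z ω - b) ^ 2 ∂P = Var[Z; P] + (∫ ω, Z ω ∂P - b) ^ 2 := by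
  have hZb : MemLp (fun ω => Z ω - b) 2 P := hZ.sub (memLp_const b)
  rw [← variance_sub_const hZ.aestronglyMeasurable b, variance_eq_sub hZb,
    integral_sub (hZ.integrable one_le_two) (integrable_const b)]
  simp

lemma integral_sq_average_sub_eq {ι : Type*} [Fintype ι] [Nonempty ι] {T : ι → Ω → ℝ}
    {T₀ : Ω → ℝ} (hT : ∀ i, MemLp (T i) 2 P)
    (hindep : Pairwise fun i j => IndepFun (T i) (T j) P)
    (hident : ∀ i, IdentDistrib (T i) T₀ P P) (b : ℝ) :
    ∫ ω, ((Fintype.card ι : ℝ)⁻¹ * ∑ i, T i ω - b) ^ 2 ∂P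
      = Var[T₀; P] / Fintype.card ι + (∫ ω, T₀ ω ∂P - b) ^ 2 := by
  have hsum : MemLp (fun ω => ∑ i, T i ω) 2 P := memLp_finsetSum _ fun i _ => hT i
  have hcard : (Fintype.card ι : ℝ) ≠ 0 := Nat.cast_ne_zero.2 Fintype.card_ne_zero
  have hvar : Var[fun ω => ∑ i, T i ω; P] = Fintype.card ι * Var[T₀; P] := by
    rw [← Finset.sum_fn, IndepFun.variance_sum (fun i _ => hT i) fun i _ j _ hij => hindep hij]
    simp [(hident _).variance_eq]
  have hmean : ∫ ω, ∑ i, T i ω ∂P = Fintype.card ι * ∫ ω, T₀ ω ∂P := by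
    rw [integral_finsetSum _ fun i _ => (hT i).integrable one_le_two]
    simp [(hident _).integral_eq]
  rw [integral_sub_const_sq_eq_variance_add (hsum.const_mul _), variance_const_mul, hvar,
    integral_const_mul, hmean]
  field_simp

theorem integral_sq_average_truncate_sub_le {ι : Type*} [Fintype ι] [Nonempty ι]
    {K : ι → Ω → ℝ} {K₀ : Ω → ℝ} (hK₀ : MemLp K₀ 2 P)
    (hindep : Pairwise fun i j => IndepFun (K i) (K j) P)
    (hident : ∀ i, IdentDistrib (K i) K₀ P P) {ρ : ℝ} (hρ : 0 < ρ) :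
    ∫ ω, ((Fintype.card ι : ℝ)⁻¹ * ∑ i, truncate ρ (K i ω) - ∫ ω, K₀ ω ∂P) ^ 2 ∂P
      ≤ (∫ ω, K₀ ω ^ 2 ∂P) / Fintype.card ι + ((∫ ω, K₀ ω ^ 2 ∂P) / ρ) ^ 2 := by
  rw [integral_sq_average_sub_eq (T₀ := fun ω => truncate ρ (K₀ ω))
    (fun i => memLp_truncate ((hident i).memLp_iff.2 hK₀) ρ)
    (fun i j hij => (hindep hij).comp (measurable_truncate ρ) (measurable_truncate ρ))
    (fun i => (hident i).comp (measurable_truncate ρ))]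
  exact add_le_add (by gcongr; exact variance_truncate_le hK₀ ρ)
    (sq_le_sq.2 ((abs_integral_truncate_sub_le hK₀ hρ).trans (le_abs_self _)))

variable {α : Type*} [MeasurableSpace α] {X : Ω → α} {U : Ω → ℝ} {f g Ψ : α → ℝ} {F G C : ℝ}

lemma integral_regression_sq_mul (hXm : Measurable X) (hUm : Measurable U)
    (hXU : IndepFun X U P) (hUint : Integrable U P) (hUmean : ∫ ω, U ω ∂P = 0)
    (hU2int : Integrable (fun ω => U ω ^ 2) P) (hU2 : ∫ ω, U ω ^ 2 ∂P = 1)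
    (hfm : Measurable f) (hgm : Measurable g) (hΨm : Measurable Ψ)
    (hf : ∀ᵐ ω ∂P, |f (X ω)| ≤ F) (hg : ∀ᵐ ω ∂P, |g (X ω)| ≤ G)
    (hΨ : ∀ᵐ ω ∂P, |Ψ (X ω)| ≤ C) :
    ∫ ω, (f (X ω) * U ω + g (X ω)) ^ 2 * Ψ (X ω) ∂P
      = ∫ ω, f (X ω) ^ 2 * Ψ (X ω) ∂P + ∫ ω, g (X ω) ^ 2 * Ψ (X ω) ∂P := by
  have hB : ∀ᵐ ω ∂P, ‖2 * f (X ω) * g (X ω) * Ψ (X ω)‖ ≤ 2 * F * G * C := by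
    filter_upwards [hf, hg, hΨ] with ω hf hg hΨ
    have := (abs_nonneg _).trans hf
    have := (abs_nonneg _).trans hg
    simp only [Real.norm_eq_abs, abs_mul, abs_two]
    bound
  have hAU : Integrable (fun ω => f (X ω) ^ 2 * Ψ (X ω) * U ω ^ 2) P :=
    hU2int.bdd_mul (by fun_prop) (ae_norm_sq_mul_le hf hΨ)
  have hBU : Integrable (fun ω => 2 * f (X ω) * g (X ω) * Ψ (X ω) * U ω) P :=
    hUint.bdd_mul (by fun_prop) hB
  have hC : Integrable (fun ω => g (X ω) ^ 2 * Ψ (X ω)) P :=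
    .of_bound (by fun_prop) _ (ae_norm_sq_mul_le hg hΨ)
  have hindep {h : α → ℝ} {u : ℝ → ℝ} (hh : Measurable h) (hu : Measurable u) :
      ∫ ω, h (X ω) * u (U ω) ∂P = (∫ ω, h (X ω) ∂P) * ∫ ω, u (U ω) ∂P :=
    hXU.integral_fun_comp_mul_comp hXm.aemeasurable hUm.aemeasurable hh.aestronglyMeasurable
      hu.aestronglyMeasurable
  calc ∫ ω, (f (X ω) * U ω + g (X ω)) ^ 2 * Ψ (X ω) ∂P
      = ∫ ω, (f (X ω) ^ 2 * Ψ (X ω) * U ω ^ 2 + 2 * f (X ω) * g (X ω) * Ψ (X ω) * U ω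
          + g (X ω) ^ 2 * Ψ (X ω)) ∂P := by
        congr with ω; ring
    _ = _ := by
      rw [integral_add (hAU.fun_add hBU) hC, integral_add hAU hBU,
        hindep (h := fun x => f x ^ 2 * Ψ x) (u := fun t => t ^ 2) (by fun_prop) (by fun_prop),
        hindep (h := fun x => 2 * f x * g x * Ψ x) (u := fun t => t) (by fun_prop)
          measurable_id]
      simp [hU2, hUmean]

lemma integrable_pow_four_add_mul_sq (hXm : Measurable X)
    (hU4 : Integrable (fun ω => U ω ^ 4) P) (hΨm : Measurable Ψ) (hΨ : ∀ᵐ ω ∂P, |Ψ (X ω)| ≤ C)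
    (a b : ℝ) : Integrable (fun ω => (a * U ω ^ 4 + b) * Ψ (X ω) ^ 2) P := by
  have hΨ2 : ∀ᵐ ω ∂P, ‖Ψ (X ω) ^ 2‖ ≤ C ^ 2 := by
    filter_upwards [hΨ] with ω hΨ
    rw [norm_pow, Real.norm_eq_abs]
    exact pow_le_pow_left₀ (abs_nonneg _) hΨ 2
  exact ((hU4.const_mul a).fun_add (integrable_const b)).bdd_mul
    ((hΨm.comp hXm).pow_const 2).aestronglyMeasurable hΨ2 |>.congr
    (ae_of_all _ fun ω => mul_comm _ _)

lemma integral_pow_four_add_mul_sq (hXm : Measurable X) (hUm : Measurable U)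
    (hXU : IndepFun X U P) (hU4 : Integrable (fun ω => U ω ^ 4) P) (hΨm : Measurable Ψ)
    (a b : ℝ) :
    ∫ ω, (a * U ω ^ 4 + b) * Ψ (X ω) ^ 2 ∂P
      = (a * ∫ ω, U ω ^ 4 ∂P + b) * ∫ ω, Ψ (X ω) ^ 2 ∂P := by
  simp_rw [mul_comm _ (Ψ _ ^ 2)]
  rw [hXU.integral_fun_comp_mul_comp (f := fun x => Ψ x ^ 2) (g := fun t => a * t ^ 4 + b)
    hXm.aemeasurable hUm.aemeasurable (by fun_prop) (by fun_prop),
    integral_add (hU4.const_mul a) (integrable_const b), integral_const_mul]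
  simp [mul_comm]

lemma memLp_regression_sq_mul (hXm : Measurable X) (hUm : Measurable U)
    (hU4 : Integrable (fun ω => U ω ^ 4) P) (hfm : Measurable f) (hgm : Measurable g)
    (hΨm : Measurable Ψ) (hf : ∀ᵐ ω ∂P, |f (X ω)| ≤ F) (hg : ∀ᵐ ω ∂P, |g (X ω)| ≤ G)
    (hΨ : ∀ᵐ ω ∂P, |Ψ (X ω)| ≤ C) :
    MemLp (fun ω => (f (X ω) * U ω + g (X ω)) ^ 2 * Ψ (X ω)) 2 P := by
  refine (memLp_two_iff_integrable_sq (by fun_prop)).2 <|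
    ((integrable_pow_four_add_mul_sq hXm hU4 hΨm hΨ (F ^ 4) (G ^ 4)).const_mul 8).mono'
      (by fun_prop) ?_
  filter_upwards [hf, hg] with ω hf hg
  rw [Real.norm_eq_abs, abs_of_nonneg (sq_nonneg _)]
  exact mul_add_sq_mul_sq_le hf hg

lemma integral_sq_regression_sq_mul_le (hXm : Measurable X) (hUm : Measurable U)
    (hXU : IndepFun X U P) (hU4 : Integrable (fun ω => U ω ^ 4) P) (hfm : Measurable f)
    (hgm : Measurable g) (hΨm : Measurable Ψ) (hf : ∀ᵐ ω ∂P, |f (X ω)| ≤ F)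
    (hg : ∀ᵐ ω ∂P, |g (X ω)| ≤ G) (hΨ : ∀ᵐ ω ∂P, |Ψ (X ω)| ≤ C) :
    ∫ ω, ((f (X ω) * U ω + g (X ω)) ^ 2 * Ψ (X ω)) ^ 2 ∂P
      ≤ 8 * ((F ^ 4 * ∫ ω, U ω ^ 4 ∂P + G ^ 4) * ∫ ω, Ψ (X ω) ^ 2 ∂P) := by
  rw [← integral_pow_four_add_mul_sq hXm hUm hXU hU4 hΨm, ← integral_const_mul]
  refine integral_mono_ae
    (memLp_regression_sq_mul hXm hUm hU4 hfm hgm hΨm hf hg hΨ).integrable_sq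
    ((integrable_pow_four_add_mul_sq hXm hU4 hΨm hΨ _ _).const_mul 8) ?_
  filter_upwards [hf, hg] with ω hf hg
  exact mul_add_sq_mul_sq_le hf hg

lemma integral_sq_regression_sq_mul_sub_le (hXm : Measurable X) (hUm : Measurable U)
    (hXU : IndepFun X U P) (hU4 : Integrable (fun ω => U ω ^ 4) P) (hfm : Measurable f)
    (hgm : Measurable g) (hΨm : Measurable Ψ) (hf : ∀ᵐ ω ∂P, |f (X ω)| ≤ F)
    (hg : ∀ᵐ ω ∂P, |g (X ω)| ≤ G) (hΨ : ∀ᵐ ω ∂P, |Ψ (X ω)| ≤ C) :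
    ∫ ω, ((f (X ω) * U ω + g (X ω)) ^ 2 * Ψ (X ω) - ∫ ω, g (X ω) ^ 2 * Ψ (X ω) ∂P) ^ 2 ∂P
      ≤ 16 * ((∫ ω, U ω ^ 4 ∂P) * F ^ 4 + G ^ 4) * ∫ ω, Ψ (X ω) ^ 2 ∂P
        + 2 * G ^ 4 * (∫ ω, |Ψ (X ω)| ∂P) ^ 2 := by
  have hw := abs_integral_sq_mul_le (b := fun ω => Ψ (X ω))
    (.of_bound (hΨm.comp hXm).aestronglyMeasurable C (by simpa using hΨ)) hg
  have hw2 := sq_le_sq.2 (hw.trans (le_abs_self _))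
  have hZ2 := integral_sq_regression_sq_mul_le hXm hUm hXU hU4 hfm hgm hΨm hf hg hΨ
  refine (integral_sub_const_sq_le
    (memLp_regression_sq_mul hXm hUm hU4 hfm hgm hΨm hf hg hΨ) _).trans ?_
  linarith

end Moments

lemma abs_le_iSup_abs {β : Type*} {s : Set β} {h : β → ℝ} {C : ℝ} (hC : ∀ x ∈ s, |h x| ≤ C)
    {x : β} (hx : x ∈ s) : |h x| ≤ ⨆ y : s, |h y.1| :=
  le_ciSup (f := fun y : s => |h y.1|) ⟨C, by rintro _ ⟨y, rfl⟩; exact hC y.1 y.2⟩ ⟨x, hx⟩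

lemma one_le_log_of_three_le {x : ℝ} (hx : 3 ≤ x) : 1 ≤ Real.log x := by
  rw [Real.le_log_iff_exp_le (by linarith)]
  linarith [Real.exp_one_lt_d9]

lemma div_add_div_sqrt_sq_le {V M L x : ℝ} (hV : 0 ≤ V) (hVM : V ≤ M) (hL : 1 ≤ L)
    (hx : 0 < x) : V / x + (V / √(x / L)) ^ 2 ≤ (M + M ^ 2) * L / x := by
  have hVL : V + V ^ 2 * L ≤ (M + M ^ 2) * L := by
    nlinarith [mul_le_mul hVM hVM hV (hV.trans hVM), mul_le_mul_of_nonneg_left hL (hV.trans hVM)]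
  calc V / x + (V / √(x / L)) ^ 2 = (V + V ^ 2 * L) / x := by
        rw [div_pow, Real.sq_sqrt (by positivity)]
        field_simp
    _ ≤ (M + M ^ 2) * L / x := by gcongr

theorem truncated_coefficient_MSE_H2_general
    {Ω : Type*} [MeasurableSpace Ω] (P : Measure Ω) [IsProbabilityMeasure P]
    (d : ℕ)
    (X : Ω → (Fin d → ℝ)) (U : Ω → ℝ)
    (hXm : Measurable X) (hUm : Measurable U)
    -- X is uniformly distributed on the cube [0,1]^d
    (hXlaw : Measure.map X P = volume.restrict (Set.Icc (0 : Fin d → ℝ) 1))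
    -- U independent of X, E[U] = 0, E[U²] = 1, E[U⁴] < ∞
    (hXU : IndepFun X U P)
    (hUint : Integrable U P) (hUmean : ∫ ω, U ω ∂P = 0)
    (hU2int : Integrable (fun ω => (U ω) ^ 2) P)
    (hU2 : ∫ ω, (U ω) ^ 2 ∂P = 1)
    (hU4 : Integrable (fun ω => (U ω) ^ 4) P)
    -- f, g bounded measurable on the cube, r = f²
    (f g : (Fin d → ℝ) → ℝ) (hfm : Measurable f) (hgm : Measurable g)
    (Cf : ℝ) (hf : ∀ x ∈ Set.Icc (0 : Fin d → ℝ) 1, |f x| ≤ Cf)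
    (Cg : ℝ) (hg : ∀ x ∈ Set.Icc (0 : Fin d → ℝ) 1, |g x| ≤ Cg)
    (r : (Fin d → ℝ) → ℝ) (hr : ∀ x, r x = (f x) ^ 2)
    -- the i.i.d. copies (Xᵢ, Uᵢ), i = 1,…,n, of (X, U), and Yᵢ = f(Xᵢ)Uᵢ + g(Xᵢ)
    (n : ℕ) (hn : 3 ≤ n)
    (Xs : Fin n → Ω → (Fin d → ℝ)) (Us : Fin n → Ω → ℝ)
    (hiid : iIndepFun (fun i ω => (Xs i ω, Us i ω)) P)
    (hident : ∀ i, IdentDistrib (fun ω => (Xs i ω, Us i ω))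
      (fun ω => (X ω, U ω)) P P)
    -- Ψ bounded measurable on the cube
    (Ψ : (Fin d → ℝ) → ℝ) (hΨm : Measurable Ψ)
    (CΨ : ℝ) (hΨ : ∀ x ∈ Set.Icc (0 : Fin d → ℝ) 1, |Ψ x| ≤ CΨ)
    -- the quantities w, M, ρₙ and the summands Kᵢ
    (w : ℝ) (hw : w = ∫ x in Set.Icc (0 : Fin d → ℝ) 1, (g x) ^ 2 * Ψ x)
    (M : ℝ)
    (hM : M = 16 * ((∫ ω, (U ω) ^ 4 ∂P)
                      * (⨆ x : (Set.Icc (0 : Fin d → ℝ) 1), |f x.1|) ^ 4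
                    + (⨆ x : (Set.Icc (0 : Fin d → ℝ) 1), |g x.1|) ^ 4)
              * (∫ x in Set.Icc (0 : Fin d → ℝ) 1, (Ψ x) ^ 2)
            + 2 * (⨆ x : (Set.Icc (0 : Fin d → ℝ) 1), |g x.1|) ^ 4
                * (∫ x in Set.Icc (0 : Fin d → ℝ) 1, |Ψ x|) ^ 2)
    (ρ : ℝ) (hρ : ρ = Real.sqrt ((n : ℝ) / Real.log n))
    (K : Fin n → Ω → ℝ)
    (hK : ∀ i ω, K i ω = (f (Xs i ω) * Us i ω + g (Xs i ω)) ^ 2 * Ψ (Xs i ω) - w) :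
    ∫ ω, ((1 / (n : ℝ)) * (∑ i, if |K i ω| ≤ ρ then K i ω else 0)
          - ∫ x in Set.Icc (0 : Fin d → ℝ) 1, r x * Ψ x) ^ 2 ∂P
      ≤ (M + M ^ 2) * Real.log n / n := by
  have hlaw (h : (Fin d → ℝ) → ℝ) (hh : Measurable h) :
      ∫ x in Set.Icc (0 : Fin d → ℝ) 1, h x = ∫ ω, h (X ω) ∂P := by
    rw [← hXlaw, integral_map hXm.aemeasurable hh.aestronglyMeasurable]
  have hXQ : ∀ᵐ ω ∂P, X ω ∈ Set.Icc (0 : Fin d → ℝ) 1 :=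
    ae_of_ae_map hXm.aemeasurable (hXlaw ▸ ae_restrict_mem₀ measurableSet_Icc.nullMeasurableSet)
  have hfX := hXQ.mono fun ω hω => abs_le_iSup_abs hf hω
  have hgX := hXQ.mono fun ω hω => abs_le_iSup_abs hg hω
  have hΨX := hXQ.mono fun ω hω => hΨ (X ω) hω
  have hw' : w = ∫ ω, g (X ω) ^ 2 * Ψ (X ω) ∂P := hw.trans (hlaw _ (by fun_prop))
  have hZ := memLp_regression_sq_mul hXm hUm hU4 hfm hgm hΨm hfX hgX hΨX
  have hK₀ := hZ.sub (memLp_const w)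
  have hmean : ∫ ω, ((f (X ω) * U ω + g (X ω)) ^ 2 * Ψ (X ω) - w) ∂P
      = ∫ x in Set.Icc (0 : Fin d → ℝ) 1, r x * Ψ x := by
    rw [integral_sub (hZ.integrable one_le_two) (integrable_const w),
      integral_regression_sq_mul hXm hUm hXU hUint hUmean hU2int hU2 hfm hgm hΨm hfX hgX hΨX,
      ← hw', integral_const]
    simp [hr, hlaw (fun x => f x ^ 2 * Ψ x) (by fun_prop)]
  have hV : ∫ ω, ((f (X ω) * U ω + g (X ω)) ^ 2 * Ψ (X ω) - w) ^ 2 ∂P ≤ M := by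
    rw [hM, hlaw _ (by fun_prop), hlaw _ (by fun_prop), hw']
    exact integral_sq_regression_sq_mul_sub_le hXm hUm hXU hU4 hfm hgm hΨm hfX hgX hΨX
  have hφm : Measurable fun p : (Fin d → ℝ) × ℝ => (f p.1 * p.2 + g p.1) ^ 2 * Ψ p.1 - w := by
    fun_prop
  have hlog : 1 ≤ Real.log n := one_le_log_of_three_le (by exact_mod_cast hn)
  have : NeZero n := ⟨by omega⟩
  have hmse := integral_sq_average_truncate_sub_le (K := fun i ω => _) hK₀
    (fun i j hij => (hiid.indepFun hij).comp hφm hφm) (fun i => (hident i).comp hφm)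
    (hρ ▸ Real.sqrt_pos.2 (div_pos (by positivity) (by linarith)))
  obtain rfl : K = _ := funext fun i => funext (hK i)
  subst hρ
  rw [← hmean]
  simp only [Fintype.card_fin] at hmse
  calc _ = _ := by simp [truncate]
    _ ≤ _ := hmse
    _ ≤ _ := div_add_div_sqrt_sq_le (integral_nonneg fun ω => sq_nonneg _) hV hlog
          (by positivity)

/-- second inequality of Lemma 2 of the paper, assumption set H2.
With `w = ∫ g² Ψ`, `β = ∫ r Ψ`, `ρₙ = √(n / ln n)`, `Kᵢ = Yᵢ² Ψ(Xᵢ) − w` and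
`β̂ = (1/n) Σᵢ Kᵢ 1_{|Kᵢ| ≤ ρₙ}`, one has, with
`M = 16 (E[U⁴] ‖f‖_∞⁴ + ‖g‖_∞⁴) ∫ Ψ² + 2 ‖g‖_∞⁴ (∫ |Ψ|)²`,
`E[(β̂ − β)²] ≤ (M + M²) (ln n)/n`. -/
theorem truncated_coefficient_MSE_H2
    {Ω : Type*} [MeasurableSpace Ω] (P : Measure Ω) [IsProbabilityMeasure P]
    (d : ℕ) (hd : 1 ≤ d)
    (X : Ω → (Fin d → ℝ)) (U : Ω → ℝ)
    (hXm : Measurable X) (hUm : Measurable U)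
    -- X is uniformly distributed on the cube [0,1]^d
    (hXlaw : Measure.map X P = volume.restrict (Set.Icc (0 : Fin d → ℝ) 1))
    -- U independent of X, E[U] = 0, E[U²] = 1, E[U⁴] < ∞
    (hXU : IndepFun X U P)
    (hUint : Integrable U P) (hUmean : ∫ ω, U ω ∂P = 0)
    (hU2int : Integrable (fun ω => (U ω) ^ 2) P)
    (hU2 : ∫ ω, (U ω) ^ 2 ∂P = 1)
    (hU4 : Integrable (fun ω => (U ω) ^ 4) P)
    -- f, g bounded measurable on the cube, r = f²
    (f g : (Fin d → ℝ) → ℝ) (hfm : Measurable f) (hgm : Measurable g)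
    (Cf : ℝ) (hf : ∀ x ∈ Set.Icc (0 : Fin d → ℝ) 1, |f x| ≤ Cf)
    (Cg : ℝ) (hg : ∀ x ∈ Set.Icc (0 : Fin d → ℝ) 1, |g x| ≤ Cg)
    (r : (Fin d → ℝ) → ℝ) (hr : ∀ x, r x = (f x) ^ 2)
    -- the i.i.d. copies (Xᵢ, Uᵢ), i = 1,…,n, of (X, U), and Yᵢ = f(Xᵢ)Uᵢ + g(Xᵢ)
    (n : ℕ) (hn : 3 ≤ n)
    (Xs : Fin n → Ω → (Fin d → ℝ)) (Us : Fin n → Ω → ℝ)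
    (hXsm : ∀ i, Measurable (Xs i)) (hUsm : ∀ i, Measurable (Us i))
    (hiid : iIndepFun (fun i ω => (Xs i ω, Us i ω)) P)
    (hident : ∀ i, IdentDistrib (fun ω => (Xs i ω, Us i ω))
      (fun ω => (X ω, U ω)) P P)
    -- Ψ bounded measurable on the cube
    (Ψ : (Fin d → ℝ) → ℝ) (hΨm : Measurable Ψ)
    (CΨ : ℝ) (hΨ : ∀ x ∈ Set.Icc (0 : Fin d → ℝ) 1, |Ψ x| ≤ CΨ)
    -- the quantities w, M, ρₙ and the summands Kᵢ
    (w : ℝ) (hw : w = ∫ x in Set.Icc (0 : Fin d → ℝ) 1, (g x) ^ 2 * Ψ x)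
    (M : ℝ)
    (hM : M = 16 * ((∫ ω, (U ω) ^ 4 ∂P)
                      * (⨆ x : (Set.Icc (0 : Fin d → ℝ) 1), |f x.1|) ^ 4
                    + (⨆ x : (Set.Icc (0 : Fin d → ℝ) 1), |g x.1|) ^ 4)
              * (∫ x in Set.Icc (0 : Fin d → ℝ) 1, (Ψ x) ^ 2)
            + 2 * (⨆ x : (Set.Icc (0 : Fin d → ℝ) 1), |g x.1|) ^ 4
                * (∫ x in Set.Icc (0 : Fin d → ℝ) 1, |Ψ x|) ^ 2)
    (ρ : ℝ) (hρ : ρ = Real.sqrt ((n : ℝ) / Real.log n))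
    (K : Fin n → Ω → ℝ)
    (hK : ∀ i ω, K i ω = (f (Xs i ω) * Us i ω + g (Xs i ω)) ^ 2 * Ψ (Xs i ω) - w) :
    ∫ ω, ((1 / (n : ℝ)) * (∑ i, if |K i ω| ≤ ρ then K i ω else 0)
          - ∫ x in Set.Icc (0 : Fin d → ℝ) 1, r x * Ψ x) ^ 2 ∂P
      ≤ (M + M ^ 2) * Real.log n / n :=
  truncated_coefficient_MSE_H2_general P d X U hXm hUm hXlaw hXU hUint hUmean hU2int hU2 hU4 f g hfm
    hgm Cf hf Cg hg r hr n hn Xs Us hiid hident Ψ hΨm CΨ hΨ w hw M hM ρ hρ K hK
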